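/- arXiv:1312.7177 — 5 statements merged into one kernel-verified Lean document; each statement's English description precedes it below -/
import Mathlib

section
/- Let m ≥ 2 and 1 ≤ l ≤ m-1, and let f(x) = x^m + x^{m-1} + ... + x^{l+1} + x^{l-1} + ... + x + 1 ∈ F_2[x] (the polynomial with all terms of degree 0 through m present except x^l). If f(x) is irreducible over F_2, then gcd(m, l) = 1. -/
open Polynomial

theorem maxweight_irreducible_gcd (m l : ℕ) (hm : 2 ≤ m) (hl1 : 1 ≤ l) (hl2 : l ≤ m - 1)
    (f : Polynomial (ZMod 2))
    (hf : f = (∑ i ∈ Finset.range (m + 1), X ^ i) + X ^ l)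
    (hirr : Irreducible f) :
    Nat.gcd m l = 1 := by
  by_contra hgcd
  set d := Nat.gcd m l with hd
  have hdl : d ∣ l := Nat.gcd_dvd_right m l
  have hdm : d ∣ m := Nat.gcd_dvd_left m l
  have hdl' : d ≤ l := Nat.le_of_dvd (by omega) hdl
  have hd1 : 1 ≤ d := Nat.pos_of_dvd_of_pos hdl (by omega)
  have hd2 : 2 ≤ d := by omega
  obtain ⟨k, hk⟩ : ∃ k, m = l + k := ⟨m - l, by omega⟩
  subst hk
  have hk1 : 1 ≤ k := by omega
  have hdk : d ∣ k := (Nat.dvd_add_right hdl).mp hdm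
  have h2 : (2 : Polynomial (ZMod 2)) = 0 := by
    have : ((2 : ℕ) : Polynomial (ZMod 2)) = 0 := CharP.cast_eq_zero _ 2
    exact_mod_cast this
  set g : Polynomial (ZMod 2) := ∑ i ∈ Finset.range d, X ^ i with hgdef
  have hg : g * (X - 1) = X ^ d - 1 := by
    simpa using geom_sum_mul (X : Polynomial (ZMod 2)) d
  have hkey : f * (X - 1) = X ^ (l + 1) * (X ^ k - 1) + (X ^ l - 1) := by
    rw [hf, add_mul, geom_sum_mul]
    linear_combination (X ^ (l + 1) - X ^ l : Polynomial (ZMod 2)) * h2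
  have hdvd1 : (X ^ d - 1 : Polynomial (ZMod 2)) ∣ X ^ k - 1 := by
    obtain ⟨a, ha⟩ := hdk
    rw [ha]
    simpa [pow_mul] using sub_dvd_pow_sub_pow (X ^ d : Polynomial (ZMod 2)) 1 a
  have hdvd2 : (X ^ d - 1 : Polynomial (ZMod 2)) ∣ X ^ l - 1 := by
    obtain ⟨a, ha⟩ := hdl
    rw [ha]
    simpa [pow_mul] using sub_dvd_pow_sub_pow (X ^ d : Polynomial (ZMod 2)) 1 a
  have hX1 : (X - 1 : Polynomial (ZMod 2)) ≠ 0 := by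
    have h := natDegree_X_sub_C (1 : ZMod 2)
    intro hz
    rw [map_one] at h
    rw [hz] at h
    simp at h
  have hdvdf : g ∣ f := by
    have h1 : g * (X - 1) ∣ f * (X - 1) := by
      rw [hg, hkey]
      exact dvd_add (hdvd1.mul_left _) hdvd2
    exact (mul_dvd_mul_iff_right hX1).mp h1
  have hdeg_pow : (X ^ d - 1 : Polynomial (ZMod 2)).natDegree = d := by
    have := natDegree_X_pow_sub_C (R := ZMod 2) (n := d) (r := 1)
    simpa using this
  have hgne : g ≠ 0 := by
    intro h
    rw [h, zero_mul] at hg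
    rw [← hg] at hdeg_pow
    simp at hdeg_pow
    omega
  have hdegg : g.natDegree = d - 1 := by
    have hm := natDegree_mul hgne hX1
    rw [hg, hdeg_pow] at hm
    have hx : (X - 1 : Polynomial (ZMod 2)).natDegree = 1 := by
      have := natDegree_X_sub_C (1 : ZMod 2)
      simpa using this
    rw [hx] at hm
    omega
  have hcoef : f.coeff (l + k) = 1 := by
    rw [hf]
    rw [coeff_add, finset_sum_coeff]
    simp [coeff_X_pow]
    omega
  have hdegf : l + k ≤ f.natDegree := le_natDegree_of_ne_zero (by rw [hcoef]; exact one_ne_zero)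
  obtain ⟨c, hc⟩ := hdvdf
  rcases hirr.isUnit_or_isUnit hc with hu | hu
  · have := natDegree_eq_zero_of_isUnit hu
    omega
  · have hcdeg := natDegree_eq_zero_of_isUnit hu
    have hcne : c ≠ 0 := hu.ne_zero
    have := natDegree_mul hgne hcne
    rw [← hc, hcdeg, hdegg] at this
    omega
end

section
/- Let m ≥ 2 and 1 ≤ l ≤ m-1, and let f(x) = x^m + x^{m-1} + ... + x^{l+1} + x^{l-1} + ... + x + 1 ∈ F_2[x] (all terms of degree 0 through m present except x^l). If d = gcd(m, l) > 1, then the polynomial 1 + x + x^2 + ... + x^{d-1} = (x^d + 1)/(x + 1) divides f(x) in F_2[x]; in particular f(x) is reducible. -/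
open Polynomial

theorem maxweight_gcd_gt_one_reducible (m l : ℕ) (hm : 2 ≤ m) (hl1 : 1 ≤ l) (hl2 : l ≤ m - 1)
    (f : Polynomial (ZMod 2))
    (hf : f = (∑ i ∈ Finset.range (m + 1), X ^ i) + X ^ l)
    (hd : 1 < Nat.gcd m l) :
    (∑ i ∈ Finset.range (Nat.gcd m l), X ^ i : Polynomial (ZMod 2)) ∣ f ∧ ¬ Irreducible f := by
  set d := Nat.gcd m l with hdef
  set g : Polynomial (ZMod 2) := ∑ i ∈ Finset.range d, X ^ i with hgdef
  have hlm : l < m := by omega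
  have hdl : d ∣ l := Nat.gcd_dvd_right m l
  have hdm : d ∣ m := Nat.gcd_dvd_left m l
  have hdml : d ∣ m - l := Nat.dvd_sub hdm hdl
  have hdlt : d < m := lt_of_le_of_lt (Nat.le_of_dvd (by omega) hdl) hlm
  -- geometric sum in char 2
  have hg : ∀ n : ℕ, (∑ i ∈ Finset.range n, (X : Polynomial (ZMod 2)) ^ i) * (X + 1)
      = X ^ n + 1 := by
    intro n
    have h := geom_sum_mul (X : Polynomial (ZMod 2)) n
    rwa [CharTwo.sub_eq_add, CharTwo.sub_eq_add] at h
  have hXne : (X + 1 : Polynomial (ZMod 2)) ≠ 0 := by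
    intro h
    have := congrArg (fun p => Polynomial.coeff p 1) h
    simp [Polynomial.coeff_one] at this
  -- divisibility of X^k + 1
  have hpow : ∀ k : ℕ, d ∣ k → (X ^ d + 1 : Polynomial (ZMod 2)) ∣ X ^ k + 1 := by
    rintro k ⟨c, rfl⟩
    have h := sub_dvd_pow_sub_pow ((X : Polynomial (ZMod 2)) ^ d) 1 c
    rw [one_pow, CharTwo.sub_eq_add, CharTwo.sub_eq_add, ← pow_mul] at h
    exact h
  -- key identity
  have hident : f * (X + 1) = X ^ (l + 1) * (X ^ (m - l) + 1) + (X ^ l + 1) := by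
    rw [hf, add_mul, hg (m + 1)]
    have hml : (X : Polynomial (ZMod 2)) ^ (l + 1) * X ^ (m - l) = X ^ (m + 1) := by
      rw [← pow_add]; congr 1; omega
    rw [← hml]; ring
  have hdvd1 : g * (X + 1) ∣ f * (X + 1) := by
    rw [hg d, hident]
    exact dvd_add (Dvd.dvd.mul_left (hpow (m - l) hdml) _) (hpow l hdl)
  have hdvd : g ∣ f := (mul_dvd_mul_iff_right hXne).mp hdvd1
  refine ⟨hdvd, ?_⟩
  -- coefficient facts
  have hfm : f.coeff m = 1 := by
    rw [hf]
    simp [Polynomial.coeff_X_pow, Finset.sum_ite_eq', Nat.lt_irrefl]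
    omega
  have hgm : g.coeff m = 0 := by
    rw [hgdef]
    simp [Polynomial.coeff_X_pow, Finset.sum_ite_eq']
    omega
  have hgu : ¬ IsUnit g := by
    intro hu
    rcases Polynomial.isUnit_iff.mp hu with ⟨r, -, hr⟩
    have h1 : g.coeff 1 = 1 := by
      rw [hgdef]
      simp [Polynomial.coeff_X_pow, Finset.sum_ite_eq']
      omega
    rw [← hr] at h1
    simp at h1
  intro hirr
  obtain ⟨h, hfh⟩ := hdvd
  rcases hirr.isUnit_or_isUnit hfh with hu | hu
  · exact hgu hu
  · rcases Polynomial.isUnit_iff.mp hu with ⟨r, -, hr⟩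
    have := congrArg (fun p => Polynomial.coeff p m) hfh
    rw [← hr] at this
    simp [Polynomial.coeff_mul_C, hgm, hfm] at this
end

section
/- Let m be odd with m ≥ 5 and 1 ≤ l ≤ m-1, and let f(x) = x^m + x^{m-1} + ... + x^{l+1} + x^{l-1} + ... + x + 1 ∈ F_2[x] be a maximum weight polynomial. Suppose g(x) = x^a + x^b + 1 is a trinomial over F_2 with 0 < b < a ≤ 2m, and g(x) = f(x)·h(x) for some h(x) ∈ F_2[x]. Then the number N of nonzero coefficients of h equals 3 or 5. -/
/-!
Put `r = m + 1`, which is even, and `J = 1 + X + ⋯ + X ^ m`, so that `f = J + X ^ l` and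
`(X + 1) J = X ^ r + 1`. From `f(1) = g(1) = 1` we get `h(1) = 1`, so `X + 1 ∣ h + 1` and
`J h ≡ J` modulo `X ^ r + 1`; hence `X ^ l h ≡ g + J`, and since `deg h < r` this pins down
`h = J + X ^ α + X ^ β + X ^ γ`, where `α, β, γ` are the residues of `a - l, b - l, -l`
modulo `r`. Thus `h` has weight `r - 3` or `r - 1` according as `α, β, γ` are distinct or not.
Multiplying `g = f h` by `X + 1` writes the `2r`-term polynomial `(X ^ r + 1) J` as a sum of
`8 + 4k` monomials, `k ∈ {1, 3}` being the number of surviving terms among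
`X ^ α, X ^ β, X ^ γ`. So `m ≤ 5` if `k = 1` and `m ≤ 9` if `k = 3`; for `m = 9` a finite
check shows that these monomials never hit every exponent below `20` an odd number of times.
-/

open Polynomial Finset

section Semiring

variable {R : Type*} [Semiring R]

noncomputable def monomialSum (E : List ℕ) : R[X] := (E.map (X ^ ·)).sum

@[simp] lemma monomialSum_nil : (monomialSum [] : R[X]) = 0 := rfl

@[simp] lemma monomialSum_cons (e : ℕ) (E : List ℕ) :
    (monomialSum (e :: E) : R[X]) = X ^ e + monomialSum E := by
  simp [monomialSum]

@[simp] lemma monomialSum_append (E F : List ℕ) :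
    (monomialSum (E ++ F) : R[X]) = monomialSum E + monomialSum F := by
  simp [monomialSum]

lemma monomialSum_map_add_left (k : ℕ) (E : List ℕ) :
    (monomialSum (E.map (k + ·)) : R[X]) = X ^ k * monomialSum E := by
  induction E with
  | nil => simp
  | cons e E ih => simp [ih, pow_add, mul_add]

lemma coeff_monomialSum (E : List ℕ) (n : ℕ) : (monomialSum E : R[X]).coeff n = E.count n := by
  induction E with
  | nil => simp
  | cons e E ih =>
    rw [monomialSum_cons, coeff_add, ih, coeff_X_pow, List.count_cons]
    split_ifs <;> simp_all [add_comm]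

lemma card_support_monomialSum_le (E : List ℕ) :
    (monomialSum E : R[X]).support.card ≤ E.length := by
  refine (card_le_card fun n hn => ?_).trans E.toFinset_card_le
  rw [mem_support_iff, coeff_monomialSum] at hn
  refine List.mem_toFinset.2 (List.count_pos_iff.1 (Nat.pos_of_ne_zero fun h0 => ?_))
  simp [h0] at hn

lemma coeff_sum_range_X_pow (k n : ℕ) :
    (∑ i ∈ range k, X ^ i : R[X]).coeff n = if n < k then 1 else 0 := by
  simp [coeff_X_pow]

lemma le_length_of_sum_range_eq_monomialSum [Nontrivial R] {k : ℕ} {E : List ℕ}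
    (h : ∑ i ∈ range k, X ^ i = (monomialSum E : R[X])) : k ≤ E.length := by
  have hsupp : (∑ i ∈ range k, X ^ i : R[X]).support = range k := by
    ext n
    simp
  have := card_support_monomialSum_le (R := R) E
  rwa [← h, hsupp, card_range] at this

lemma natDegree_le_sub_of_mul_eq [NoZeroDivisors R] {f h g : R[X]} (hfh : f * h = g)
    (hf : f ≠ 0) :
    h.natDegree ≤ g.natDegree - f.natDegree := by
  rcases eq_or_ne h 0 with rfl | hh
  · simp
  rw [← hfh, natDegree_mul hf hh]
  omega

lemma natDegree_lt_of_mul_eq_trinomial [NoZeroDivisors R] [Nontrivial R] {m l a b : ℕ}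
    (hl : l < m) (hba : b ≤ a) (ha : a ≤ 2 * m) {h : R[X]}
    (hfg : (∑ i ∈ range (m + 1), X ^ i + X ^ l) * h = X ^ a + X ^ b + 1) :
    h.natDegree < m + 1 := by
  have hf : m ≤ (∑ i ∈ range (m + 1), X ^ i + X ^ l : R[X]).natDegree :=
    le_natDegree_of_ne_zero (by simp [coeff_X_pow, hl.ne'])
  have hg : (X ^ a + X ^ b + 1 : R[X]).natDegree ≤ a := by compute_degree; omega
  have := natDegree_le_sub_of_mul_eq hfg (ne_zero_of_natDegree_gt (n := 0) (by omega))
  omega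

end Semiring

section CommRing

variable {R : Type*} [CommRing R]

lemma pow_sub_one_dvd_pow_sub_pow_of_mod_eq (x : R) {r i j : ℕ} (h : i % r = j % r) :
    x ^ r - 1 ∣ x ^ i - x ^ j := by
  have hmod (k : ℕ) : x ^ r - 1 ∣ x ^ k - x ^ (k % r) := by
    have : x ^ k - x ^ (k % r) = x ^ (k % r) * (x ^ (r * (k / r)) - 1) := by
      rw [mul_sub, ← pow_add, Nat.mod_add_div, mul_one]
    rw [this]
    exact dvd_mul_of_dvd_right (pow_one_sub_dvd_pow_mul_sub_one x r _) _
  simpa [h] using dvd_sub (hmod i) (hmod j)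

lemma dvd_of_pow_sub_one_dvd_pow_mul {x p : R} {r l : ℕ} (hl : l ≤ r)
    (h : x ^ r - 1 ∣ x ^ l * p) : x ^ r - 1 ∣ p := by
  have h' := dvd_mul_of_dvd_right h (x ^ (r - l))
  rw [← mul_assoc, ← pow_add, Nat.sub_add_cancel hl] at h'
  have : p = x ^ r * p - (x ^ r - 1) * p := by ring
  rw [this]
  exact dvd_sub h' (dvd_mul_right _ _)

lemma eq_of_X_pow_sub_one_dvd_sub [Nontrivial R] {p q : R[X]} {r : ℕ} (hp : p.natDegree < r)
    (hq : q.natDegree < r) (h : X ^ r - 1 ∣ p - q) : p = q := by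
  by_contra hne
  have hmonic : (X ^ r - C 1 : R[X]).Monic := monic_X_pow_sub_C 1 (by omega)
  refine hmonic.not_dvd_of_natDegree_lt (sub_ne_zero.2 hne) ?_ (by simpa using h)
  rw [natDegree_X_pow_sub_C]
  exact (natDegree_sub_le p q).trans_lt (max_lt hp hq)

lemma X_pow_sub_one_dvd_X_pow_mul_sub_of_mul_eq {r l : ℕ} {h g : R[X]}
    (hfg : (∑ i ∈ range r, X ^ i + X ^ l) * h = g) (h1 : h.eval 1 = 1) :
    X ^ r - 1 ∣ X ^ l * h - (g - ∑ i ∈ range r, X ^ i) := by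
  have hdvd : X - 1 ∣ h - 1 := by simpa [h1] using X_sub_C_dvd_sub_C_eval (p := h) (a := 1)
  have : X ^ l * h - (g - ∑ i ∈ range r, X ^ i) = -((h - 1) * ∑ i ∈ range r, X ^ i) := by
    rw [← hfg]; ring
  rw [this, ← mul_geom_sum]
  exact (mul_dvd_mul_right hdvd _).neg_right

end CommRing

section CharTwo

variable {R : Type*} [CommRing R] [CharP R 2]

lemma X_pow_sub_one_dvd_X_pow_mul_sub_trinomial {r l : ℕ} (hl : l ≤ r) (a b : ℕ) :
    X ^ r - 1 ∣ X ^ l * (∑ i ∈ range r, X ^ i +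
        (X ^ ((a + (r - l)) % r) + X ^ ((b + (r - l)) % r) + X ^ ((r - l) % r))) -
      (X ^ a + X ^ b + 1 - ∑ i ∈ range r, X ^ i : R[X]) := by
  have hfold (n : ℕ) : (l + (n + (r - l)) % r) % r = n % r := by
    rw [Nat.add_mod_mod, show l + (n + (r - l)) = n + r by omega, Nat.add_mod_right]
  have hJ : X ^ r - 1 ∣ (X ^ l - 1) * ∑ i ∈ range r, (X : R[X]) ^ i := by
    rw [← mul_geom_sum]
    exact mul_dvd_mul_right (sub_one_dvd_pow_sub_one X l) _
  have hα := pow_sub_one_dvd_pow_sub_pow_of_mod_eq (X : R[X]) (hfold a)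
  have hβ := pow_sub_one_dvd_pow_sub_pow_of_mod_eq (X : R[X]) (hfold b)
  have hγ : X ^ r - 1 ∣ X ^ (l + (r - l) % r) - (1 : R[X]) := by
    simpa using pow_sub_one_dvd_pow_sub_pow_of_mod_eq (X : R[X]) (j := 0) (by simpa using hfold 0)
  convert dvd_add (dvd_add (dvd_add hJ hα) hβ) hγ using 1
  linear_combination (∑ i ∈ range r, (X : R[X]) ^ i) * CharTwo.two_eq_zero (R := R[X])

theorem eq_sum_range_add_of_mul_eq_trinomial {r l a b : ℕ} (hr : Even r) (hl : l ≤ r) {h : R[X]}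
    (hdeg : h.natDegree < r) (hfg : (∑ i ∈ range r, X ^ i + X ^ l) * h = X ^ a + X ^ b + 1) :
    h = ∑ i ∈ range r, X ^ i +
      (X ^ ((a + (r - l)) % r) + X ^ ((b + (r - l)) % r) + X ^ ((r - l) % r)) := by
  have : Nontrivial R := CharP.nontrivial_of_char_ne_one (R := R) (by norm_num : 2 ≠ 1)
  have hr0 : (r : R) = 0 := (CharP.cast_eq_zero_iff R 2 r).2 hr.two_dvd
  have h1 : h.eval 1 = 1 := by
    simpa [eval_finsetSum, hr0, CharTwo.add_self_eq_zero] using congrArg (eval 1) hfg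
  apply eq_of_X_pow_sub_one_dvd_sub hdeg
  · rw [Nat.lt_iff_le_pred (by omega)]
    refine natDegree_le_iff_coeff_eq_zero.2 fun N hN => ?_
    have := Nat.mod_lt (a + (r - l)) (show 0 < r by omega)
    have := Nat.mod_lt (b + (r - l)) (show 0 < r by omega)
    have := Nat.mod_lt (r - l) (show 0 < r by omega)
    simp only [coeff_add, coeff_sum_range_X_pow, coeff_X_pow]
    repeat rw [if_neg (by omega)]
    simp
  · refine dvd_of_pow_sub_one_dvd_pow_mul hl ?_
    simpa [mul_sub] using dvd_sub (X_pow_sub_one_dvd_X_pow_mul_sub_of_mul_eq hfg h1)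
      (X_pow_sub_one_dvd_X_pow_mul_sub_trinomial (R := R) hl a b)

lemma exists_nodup_monomialSum_eq (α β γ : ℕ) :
    ∃ B : List ℕ, B.Nodup ∧ B ⊆ [α, β, γ] ∧ (B.length = 1 ∨ B = [α, β, γ]) ∧
      (monomialSum B : R[X]) = X ^ α + X ^ β + X ^ γ := by
  by_cases hαβ : α = β
  · exact ⟨[γ], by simp, by simp, by simp, by simp [hαβ, CharTwo.add_self_eq_zero]⟩
  by_cases hαγ : α = γ
  · exact ⟨[β], by simp, by simp, by simp, by
      rw [monomialSum_cons, monomialSum_nil, hαγ, add_right_comm, CharTwo.add_self_eq_zero]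
      simp⟩
  by_cases hβγ : β = γ
  · exact ⟨[α], by simp, by simp, by simp, by
      simp [hβγ, add_assoc, CharTwo.add_self_eq_zero]⟩
  exact ⟨[α, β, γ], by simp [*], by simp, by simp, by simp [add_assoc]⟩

lemma card_support_sum_range_add_monomialSum {r : ℕ} {B : List ℕ} (hB : B.Nodup)
    (hBr : ∀ x ∈ B, x < r) :
    (∑ i ∈ range r, X ^ i + monomialSum B : R[X]).support.card = r - B.length := by
  have : Nontrivial R := CharP.nontrivial_of_char_ne_one (R := R) (by norm_num : 2 ≠ 1)
  have hsupp :
      (∑ i ∈ range r, X ^ i + monomialSum B : R[X]).support = range r \ B.toFinset := by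
    ext n
    simp only [mem_support_iff, coeff_add, coeff_sum_range_X_pow, coeff_monomialSum, mem_sdiff,
      mem_range, List.mem_toFinset]
    by_cases hn : n ∈ B
    · simp [List.count_eq_one_of_mem hB hn, hBr n hn, hn, CharTwo.add_self_eq_zero]
    · simp [List.count_eq_zero_of_not_mem hn, hn]
  rw [hsupp, card_sdiff_of_subset, card_range, List.toFinset_card_of_nodup hB]
  intro x hx
  simpa using hBr x (List.mem_toFinset.1 hx)

/-- The exponents of `(X + 1) G + (X ^ r + 1) (X ^ l + B) + X ^ l (X + 1) B`, with `G`, `B` read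
as sums of monomials. -/
def expansionExponents (r l : ℕ) (G B : List ℕ) : List ℕ :=
  G ++ G.map (1 + ·) ++ [l, r + l] ++ B ++ B.map (r + ·) ++ B.map (l + ·) ++ B.map (l + 1 + ·)

lemma length_expansionExponents (r l : ℕ) (G B : List ℕ) :
    (expansionExponents r l G B).length = 2 * G.length + 2 + 4 * B.length := by
  simp [expansionExponents]
  ring

lemma sum_range_two_mul_eq_monomialSum {r l : ℕ} {G B : List ℕ}
    (h : (∑ i ∈ range r, X ^ i + X ^ l) * (∑ i ∈ range r, X ^ i + monomialSum B) =
      (monomialSum G : R[X])) :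
    ∑ i ∈ range (2 * r), (X : R[X]) ^ i = monomialSum (expansionExponents r l G B) := by
  set J := ∑ i ∈ range r, (X : R[X]) ^ i
  have hJ : (X - 1) * J = X ^ r - 1 := mul_geom_sum X r
  have hS : ∑ i ∈ range (2 * r), (X : R[X]) ^ i = (X ^ r + 1) * J := by
    rw [two_mul, sum_range_add]
    simp_rw [pow_add, ← mul_sum]
    ring
  simp only [expansionExponents, monomialSum_append, monomialSum_map_add_left, monomialSum_cons,
    monomialSum_nil, hS]
  linear_combination (1 + X) * h - (J + monomialSum B + X ^ l) * hJ + (J - J ^ 2 - J * monomialSum B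
    - X ^ l * J - (1 + X) * X ^ l * monomialSum B - X ^ r * monomialSum B - X ^ (r + l)) *
    CharTwo.two_eq_zero (R := R[X])

end CharTwo

lemma odd_count_of_sum_range_eq_monomialSum {k : ℕ} {E : List ℕ}
    (h : ∑ i ∈ range k, X ^ i = (monomialSum E : (ZMod 2)[X])) {n : ℕ} (hn : n < k) :
    Odd (E.count n) := by
  have := congrArg (coeff · n) h
  simp only [coeff_sum_range_X_pow, coeff_monomialSum, if_pos hn] at this
  exact ZMod.natCast_eq_one_iff_odd.1 this.symm

lemma exists_even_count_expansionExponents_ten :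
    ∀ l < 10, ∀ a < 20, ∀ b < a, ∃ n < 20, Even ((expansionExponents 10 l [a, b, 0]
      [(a + (10 - l)) % 10, (b + (10 - l)) % 10, (10 - l) % 10]).count n) := by
  decide +kernel

theorem maxweight_trinomial_factor_weight_general (m l : ℕ) (hm : Odd m) (hm5 : 5 ≤ m)
    (hl2 : l ≤ m - 1)
    (f : Polynomial (ZMod 2))
    (hf : f = (∑ i ∈ Finset.range (m + 1), X ^ i) + X ^ l)
    (a b : ℕ) (hba : b < a) (ha : a ≤ 2 * m)
    (g : Polynomial (ZMod 2)) (hg : g = X ^ a + X ^ b + 1)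
    (h : Polynomial (ZMod 2)) (hgh : g = f * h) :
    h.support.card = 3 ∨ h.support.card = 5 := by
  subst hf hg
  have hdeg := natDegree_lt_of_mul_eq_trinomial (by omega) hba.le ha hgh.symm
  have hquot := eq_sum_range_add_of_mul_eq_trinomial hm.add_one (by omega) hdeg hgh.symm
  obtain ⟨B, hBnodup, hBsub, hBlen, hBsum⟩ := exists_nodup_monomialSum_eq (R := ZMod 2)
    ((a + (m + 1 - l)) % (m + 1)) ((b + (m + 1 - l)) % (m + 1)) ((m + 1 - l) % (m + 1))
  rw [← hBsum] at hquot
  have hcard : h.support.card = m + 1 - B.length := by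
    refine hquot ▸ card_support_sum_range_add_monomialSum hBnodup fun x hx => ?_
    obtain rfl | rfl | rfl : x = _ ∨ x = _ ∨ x = _ := by simpa using hBsub hx
    all_goals exact Nat.mod_lt _ (by omega)
  have hcover := sum_range_two_mul_eq_monomialSum (G := [a, b, 0])
    (by rw [← hquot, ← hgh]; simp [add_assoc])
  have hlen := le_length_of_sum_range_eq_monomialSum hcover
  rw [length_expansionExponents] at hlen
  rcases hBlen with hB | rfl
  · right; simp only [List.length_cons, List.length_nil] at hlen; omega
  simp only [List.length_cons, List.length_nil] at hcard hlen
  obtain rfl | rfl | rfl : m = 5 ∨ m = 7 ∨ m = 9 := by obtain ⟨k, rfl⟩ := hm; omega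
  · left; omega
  · right; omega
  · obtain ⟨n, hn, heven⟩ :=
      exists_even_count_expansionExponents_ten l (by omega) a (by omega) b hba
    exact absurd heven (Nat.not_even_iff_odd.2 (odd_count_of_sum_range_eq_monomialSum hcover hn))

theorem maxweight_trinomial_factor_weight (m l : ℕ) (hm : Odd m) (hm5 : 5 ≤ m)
    (hl1 : 1 ≤ l) (hl2 : l ≤ m - 1)
    (f : Polynomial (ZMod 2))
    (hf : f = (∑ i ∈ Finset.range (m + 1), X ^ i) + X ^ l)
    (a b : ℕ) (hb : 0 < b) (hba : b < a) (ha : a ≤ 2 * m)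
    (g : Polynomial (ZMod 2)) (hg : g = X ^ a + X ^ b + 1)
    (h : Polynomial (ZMod 2)) (hgh : g = f * h) :
    h.support.card = 3 ∨ h.support.card = 5 :=
  maxweight_trinomial_factor_weight_general m l hm hm5 hl2 f hf a b hba ha g hg h hgh
end

section
/- Let m be odd with 1 ≤ l ≤ m-1, and let f(x) = x^m + x^{m-1} + ... + x^{l+1} + x^{l-1} + ... + x + 1 ∈ F_2[x] be a maximum weight polynomial. Suppose there exists a trinomial g(x) = x^a + x^b + 1 over F_2 with 0 < b < a ≤ 2m such that f(x) divides g(x). Then f(x) or its reciprocal f*(x) = x^m·f(1/x) is one of the following seven polynomials: x^3 + x + 1; x^3 + x^2 + 1; x^5 + x^3 + x^2 + x + 1; x^5 + x^4 + x^3 + x + 1; x^5 + x^4 + x^3 + x^2 + 1; x^7 + x^6 + x^5 + x^4 + x^3 + x + 1; x^7 + x^6 + x^5 + x^4 + x^3 + x^2 + 1. -/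
/-!
Write `f = S + X ^ l` with `S = 1 + X + ⋯ + X ^ m` and `n = m + 1`, which is even, and let
`f * q = g = X ^ a + X ^ b + 1`. Then `deg q < n`, and `q(1) = 1` because `f(1) = g(1) = 1`.

Reduce modulo `X ^ n - 1`, i.e. fold exponents modulo `n`; folding `X ^ l * q` merges no terms.
Since `S * q ≡ q(1) * S = S`, we get `X ^ l * q ≡ S + g`, so `q` has at least `n - 3` terms.
Multiplying `f * q = g` by `X + 1` gives `(X ^ n + 1) * q = (X + 1) * g + X ^ l * p` with
`p = (X + 1) * q`. The left side has twice as many terms as `q`, and `(X + 1) * g` has at most 6.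
Folding gives `X ^ l * p ≡ (X + 1) * g`, and as `deg p ≤ n` folding `X ^ l * p` loses at most two
terms, so `p` has at most 8. Hence `q` has at most 7 terms and `m ≤ 9`. For the remaining `m`,
the trinomials of degree at most `2 * m` are tested against `f` directly, computing `X ^ k mod f`
with the companion matrix of `f`.
-/

open Polynomial Finset Matrix

namespace Polynomial

variable {R : Type*}

section Semiring

variable [Semiring R]

theorem card_support_add_le (p q : R[X]) : #(p + q).support ≤ #p.support + #q.support :=
  (card_le_card support_add).trans (card_union_le _ _)

theorem card_support_X_pow_le (k : ℕ) : #(X ^ k : R[X]).support ≤ 1 :=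
  card_support_le_one_iff_monomial.2 ⟨k, 1, X_pow_eq_monomial k⟩

theorem card_support_X_pow_add_X_pow_add_one_le (a b : ℕ) :
    #(X ^ a + X ^ b + 1 : R[X]).support ≤ 3 := by
  have h1 := card_support_X_pow_le (R := R) 0
  rw [pow_zero] at h1
  have := card_support_add_le (X ^ a + X ^ b : R[X]) 1
  have := card_support_add_le (X ^ a : R[X]) (X ^ b)
  have := card_support_X_pow_le (R := R) a
  have := card_support_X_pow_le (R := R) b
  omega

theorem support_add_of_disjoint {p q : R[X]} (h : Disjoint p.support q.support) :
    (p + q).support = p.support ∪ q.support := by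
  refine subset_antisymm support_add fun e he => ?_
  rw [mem_support_iff, coeff_add]
  rcases mem_union.1 he with hp | hq
  · rw [notMem_support_iff.1 (disjoint_left.1 h hp), add_zero]
    exact mem_support_iff.1 hp
  · rw [notMem_support_iff.1 (disjoint_right.1 h hq), zero_add]
    exact mem_support_iff.1 hq

theorem support_X_pow_mul (l : ℕ) (p : R[X]) :
    (X ^ l * p).support = p.support.image (l + ·) := by
  ext e
  simp only [mem_support_iff, mem_image, coeff_X_pow_mul']
  constructor
  · intro h
    split_ifs at h with hle
    · exact ⟨e - l, h, by omega⟩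
    · exact absurd rfl h
  · rintro ⟨i, hi, rfl⟩
    simpa using hi

theorem card_support_X_pow_mul (l : ℕ) (p : R[X]) : #(X ^ l * p).support = #p.support := by
  rw [support_X_pow_mul, card_image_of_injective _ (add_right_injective l)]

theorem support_sum_range_X_pow [Nontrivial R] (n : ℕ) :
    (∑ i ∈ range n, X ^ i : R[X]).support = range n := by
  ext e
  simp [mem_support_iff, finsetSum_coeff, coeff_X_pow]

/-- Reduction modulo `X ^ n - 1`: every exponent is reduced modulo `n`. -/
noncomputable def foldMod (n : ℕ) : R[X] →+ R[X] where
  toFun p := ⟨AddMonoidAlgebra.mapDomain (· % n) p.toFinsupp⟩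
  map_zero' := by simp
  map_add' p q := by
    rcases p with ⟨p⟩; rcases q with ⟨q⟩
    simp only [← ofFinsupp_add]
    exact congrArg ofFinsupp (AddMonoidAlgebra.mapDomain_add _ _ _)

theorem foldMod_monomial (n i : ℕ) (c : R) : foldMod n (monomial i c) = monomial (i % n) c := by
  simp [foldMod, toFinsupp_monomial, AddMonoidAlgebra.mapDomain_single, ofFinsupp_single]

theorem foldMod_X_pow_mul (n : ℕ) (p : R[X]) : foldMod n (X ^ n * p) = foldMod n p := by
  induction p using Polynomial.induction_on' with
  | add u v hu hv => rw [mul_add, map_add, hu, hv, map_add]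
  | monomial i c =>
    rw [X_pow_eq_monomial, monomial_mul_monomial, one_mul, foldMod_monomial, foldMod_monomial,
      Nat.add_mod_left]

theorem foldMod_eq_self {n : ℕ} {p : R[X]} (hp : p.support ⊆ range n) :
    foldMod n p = p := by
  calc foldMod n p = ∑ i ∈ p.support, foldMod n (monomial i (p.coeff i)) := by
        rw [← map_sum, ← as_sum_support]
    _ = p := by
      conv_rhs => rw [p.as_sum_support]
      refine sum_congr rfl fun i hi => ?_
      rw [foldMod_monomial, Nat.mod_eq_of_lt (mem_range.1 (hp hi))]

theorem support_foldMod_subset (n : ℕ) (p : R[X]) :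
    (foldMod n p).support ⊆ p.support.image (· % n) := by
  rcases p with ⟨p⟩
  simpa [foldMod, support_ofFinsupp, AddMonoidAlgebra.mapDomain, AddMonoidAlgebra.coeff_ofCoeff]
    using Finsupp.mapDomain_support (f := (· % n)) (s := p.coeff)

theorem card_support_foldMod_le (n : ℕ) (p : R[X]) : #(foldMod n p).support ≤ #p.support :=
  (card_le_card (support_foldMod_subset n p)).trans card_image_le

theorem card_support_foldMod_of_injOn {n : ℕ} {p : R[X]} (h : Set.InjOn (· % n) p.support) :
    #(foldMod n p).support = #p.support := by
  rcases p with ⟨p⟩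
  rw [support_ofFinsupp] at h
  have hs : (foldMod n ⟨p⟩).support = p.coeff.support.image (· % n) := by
    change (ofFinsupp (AddMonoidAlgebra.mapDomain (· % n) p)).support = _
    rw [support_ofFinsupp]
    exact Finsupp.mapDomain_support_of_injOn p.coeff h
  rw [hs, card_image_of_injOn h, support_ofFinsupp]

theorem card_support_foldMod_X_pow_mul {n : ℕ} (l : ℕ) {p : R[X]} (hp : p.natDegree < n) :
    #(foldMod n (X ^ l * p)).support = #p.support := by
  refine (card_support_foldMod_of_injOn ?_).trans (card_support_X_pow_mul l p)
  rw [support_X_pow_mul, coe_image]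
  rintro _ ⟨i, hi, rfl⟩ _ ⟨j, hj, rfl⟩ hij
  have hi' := (le_natDegree_of_mem_supp i hi).trans_lt hp
  have hj' := (le_natDegree_of_mem_supp j hj).trans_lt hp
  have := Nat.ModEq.add_left_cancel' l hij
  simp only [Nat.ModEq, Nat.mod_eq_of_lt hi', Nat.mod_eq_of_lt hj'] at this
  rw [this]

end Semiring

section Ring

variable [Ring R]

theorem card_support_sub_le (p q : R[X]) : #(p - q).support ≤ #p.support + #q.support := by
  simpa [sub_eq_add_neg, support_neg] using card_support_add_le p (-q)

theorem card_support_X_pow_mul_sub_self {n : ℕ} {p : R[X]} (hp : p.natDegree < n) :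
    #(X ^ n * p - p).support = 2 * #p.support := by
  have hdisj : Disjoint (X ^ n * p).support (-p).support := by
    rw [support_neg, support_X_pow_mul, disjoint_left]
    rintro _ he hmem
    obtain ⟨i, -, rfl⟩ := mem_image.1 he
    have := le_natDegree_of_mem_supp _ hmem
    omega
  rw [sub_eq_add_neg, support_add_of_disjoint hdisj, card_union_of_disjoint hdisj,
    card_support_X_pow_mul, support_neg, two_mul]

theorem foldMod_X_pow_sub_one_mul (n : ℕ) (p : R[X]) : foldMod n ((X ^ n - 1) * p) = 0 := by
  rw [sub_mul, one_mul, map_sub, foldMod_X_pow_mul, sub_self]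

theorem card_support_le_card_support_foldMod_X_pow_mul_add_two {n : ℕ} (hn : 0 < n) (l : ℕ)
    {p : R[X]} (hp : p.natDegree ≤ n) :
    #p.support ≤ #(foldMod n (X ^ l * p)).support + 2 := by
  set M := monomial p.natDegree p.leadingCoeff
  have hM : #M.support ≤ 1 := card_support_le_one_iff_monomial.2 ⟨_, _, rfl⟩
  have hsplit : p = p.eraseLead + M := (eraseLead_add_monomial_natDegree_leadingCoeff p).symm
  have hlead : p.eraseLead.natDegree < n := (eraseLead_natDegree_le p).trans_lt (by omega)
  have hfold :
      foldMod n (X ^ l * p.eraseLead) = foldMod n (X ^ l * p) - foldMod n (X ^ l * M) := by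
    conv_rhs => rw [hsplit]
    rw [mul_add, map_add, add_sub_cancel_right]
  calc #p.support = #(p.eraseLead + M).support := by rw [← hsplit]
    _ ≤ #p.eraseLead.support + #M.support := card_support_add_le _ _
    _ = #(foldMod n (X ^ l * p.eraseLead)).support + #M.support := by
      rw [card_support_foldMod_X_pow_mul l hlead]
    _ ≤ #(foldMod n (X ^ l * p)).support + #(foldMod n (X ^ l * M)).support + #M.support := by
      rw [hfold]; gcongr; exact card_support_sub_le _ _
    _ ≤ _ := by
      have := (card_support_foldMod_le n (X ^ l * M)).trans (card_support_X_pow_mul l M).le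
      omega

end Ring

theorem not_dvd_of_aeval_mulVec {n : Type*} [Fintype n] [DecidableEq n] [CommSemiring R]
    {A : Matrix n n R} {v : n → R} {f g : R[X]} (hf : aeval A f *ᵥ v = 0)
    (hg : aeval A g *ᵥ v ≠ 0) : ¬ f ∣ g := by
  rintro ⟨q, rfl⟩
  rw [mul_comm, map_mul, ← mulVec_mulVec, hf, mulVec_zero] at hg
  exact hg rfl

end Polynomial

theorem Matrix.pow_mulVec_eq_iterate {n R : Type*} [Fintype n] [DecidableEq n] [CommSemiring R]
    (A : Matrix n n R) (v : n → R) (k : ℕ) : A ^ k *ᵥ v = (A *ᵥ ·)^[k] v := by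
  induction k with
  | zero => simp
  | succ k ih => rw [pow_succ', ← mulVec_mulVec, ih, Function.iterate_succ_apply']

noncomputable def maxWeight (m l : ℕ) : (ZMod 2)[X] := ∑ i ∈ range (m + 1), X ^ i + X ^ l

section MaxWeight

variable {m l : ℕ}

theorem maxWeight_eq_sub (m l : ℕ) : maxWeight m l = ∑ i ∈ range (m + 1), X ^ i - X ^ l := by
  rw [maxWeight, CharTwo.sub_eq_add]

theorem coeff_maxWeight (hl : l ≤ m) (i : ℕ) :
    (maxWeight m l).coeff i = if i ≤ m ∧ i ≠ l then 1 else 0 := by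
  simp only [maxWeight, coeff_add, finsetSum_coeff, coeff_X_pow, sum_ite_eq, mem_range]
  split_ifs <;> first | omega | decide

theorem natDegree_maxWeight (hl : l < m) : (maxWeight m l).natDegree = m := by
  refine natDegree_eq_of_le_of_coeff_ne_zero (natDegree_le_iff_coeff_eq_zero.2 fun i hi => ?_) ?_
  · rw [coeff_maxWeight hl.le, if_neg (by omega)]
  · rw [coeff_maxWeight hl.le, if_pos ⟨le_rfl, hl.ne'⟩]
    exact one_ne_zero

theorem reverse_maxWeight (hl0 : 0 < l) (hl : l < m) :
    (maxWeight m l).reverse = maxWeight m (m - l) := by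
  ext i
  rw [coeff_reverse, natDegree_maxWeight hl, coeff_maxWeight hl.le, coeff_maxWeight (by omega)]
  rcases le_or_gt i m with hi | hi
  · rw [revAt_le hi]
    split_ifs <;> first | rfl | omega
  · rw [revAt_eq_self_of_lt hi, if_neg (by omega), if_neg (by omega)]

theorem eval_one_maxWeight (hm : Odd m) (l : ℕ) : (maxWeight m l).eval 1 = 1 := by
  simp [maxWeight, eval_finsetSum, hm.natCast_zmod_two]
  decide

theorem maxWeight_mul_X_sub_one (m l : ℕ) :
    maxWeight m l * (X - 1) = X ^ (m + 1) - 1 - X ^ l * (X - 1) := by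
  rw [maxWeight_eq_sub, sub_mul, geom_sum_mul]

end MaxWeight

section TrinomialQuotient

variable {m l a b : ℕ} {q : (ZMod 2)[X]}

theorem eval_one_of_maxWeight_mul_eq (hm : Odd m) (h : maxWeight m l * q = X ^ a + X ^ b + 1) :
    q.eval 1 = 1 := by
  have := congrArg (eval 1) h
  rw [eval_mul, eval_one_maxWeight hm, one_mul] at this
  rw [this]
  simp only [eval_add, eval_pow, eval_X, one_pow, eval_one]
  decide

theorem natDegree_lt_of_maxWeight_mul_eq (hm : Odd m) (hl : l < m) (hba : b ≤ a)
    (ha : a ≤ 2 * m) (h : maxWeight m l * q = X ^ a + X ^ b + 1) : q.natDegree < m + 1 := by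
  have hq : q ≠ 0 := by
    rintro rfl
    simpa using eval_one_of_maxWeight_mul_eq hm h
  have hf : maxWeight m l ≠ 0 := by
    intro h0
    have := natDegree_maxWeight hl
    rw [h0, natDegree_zero] at this
    omega
  have hg : (X ^ a + X ^ b + 1 : (ZMod 2)[X]).natDegree ≤ a := by
    compute_degree
    omega
  have := natDegree_mul hf hq
  rw [h, natDegree_maxWeight hl] at this
  omega

theorem le_card_support_add_three_of_maxWeight_mul_eq (hm : Odd m) (hl : l < m) (hba : b ≤ a)
    (ha : a ≤ 2 * m) (h : maxWeight m l * q = X ^ a + X ^ b + 1) : m + 1 ≤ #q.support + 3 := by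
  set S : (ZMod 2)[X] := ∑ i ∈ range (m + 1), X ^ i
  obtain ⟨t, ht⟩ : X - 1 ∣ q - 1 := by
    simpa [eval_one_of_maxWeight_mul_eq hm h] using
      X_sub_C_dvd_sub_C_eval (p := q) (a := (1 : ZMod 2))
  have hshift : X ^ l * q = S + (X ^ (m + 1) - 1) * t - (X ^ a + X ^ b + 1) := by
    linear_combination -h + q * maxWeight_eq_sub m l + S * ht +
      t * geom_sum_mul (X : (ZMod 2)[X]) (m + 1)
  have hfold : S = foldMod (m + 1) (X ^ a + X ^ b + 1) + foldMod (m + 1) (X ^ l * q) := by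
    rw [hshift, map_sub, map_add _ S, foldMod_X_pow_sub_one_mul, add_zero,
      foldMod_eq_self (support_sum_range_X_pow _).le, add_sub_cancel]
  calc m + 1 = #S.support := by rw [support_sum_range_X_pow, card_range]
    _ ≤ #(X ^ a + X ^ b + 1 : (ZMod 2)[X]).support + #q.support := by
      grw [hfold, card_support_add_le, card_support_foldMod_le,
        card_support_foldMod_X_pow_mul l (natDegree_lt_of_maxWeight_mul_eq hm hl hba ha h)]
    _ ≤ #q.support + 3 := by grw [card_support_X_pow_add_X_pow_add_one_le]; omega

theorem card_support_le_seven_of_maxWeight_mul_eq (hm : Odd m) (hl : l < m) (hba : b ≤ a)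
    (ha : a ≤ 2 * m) (h : maxWeight m l * q = X ^ a + X ^ b + 1) : #q.support ≤ 7 := by
  have hdeg := natDegree_lt_of_maxWeight_mul_eq hm hl hba ha h
  set T : (ZMod 2)[X] := (X - 1) * (X ^ a + X ^ b + 1)
  set p : (ZMod 2)[X] := (X - 1) * q
  have hsplit : X ^ (m + 1) * q - q = T + X ^ l * p := by
    linear_combination (X - 1) * h - q * maxWeight_mul_X_sub_one m l
  have hT : #T.support ≤ 6 := by
    have hX : #(X - 1 : (ZMod 2)[X]).support ≤ 2 := by
      grw [card_support_sub_le, ← pow_one X, card_support_X_pow_le, ← pow_zero X,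
        card_support_X_pow_le]
    grw [card_support_mul_le, hX, card_support_X_pow_add_X_pow_add_one_le]
  have hp : #p.support ≤ 8 := by
    have hfold : foldMod (m + 1) (X ^ l * p) = -foldMod (m + 1) T := by
      rw [show X ^ l * p = (X ^ (m + 1) - 1) * q - T by linear_combination -hsplit, map_sub,
        foldMod_X_pow_sub_one_mul, zero_sub]
    have hpdeg : p.natDegree ≤ m + 1 := by
      have : (X - 1 : (ZMod 2)[X]).natDegree ≤ 1 := by compute_degree
      grw [natDegree_mul_le, this]
      omega
    grw [card_support_le_card_support_foldMod_X_pow_mul_add_two (by omega) l hpdeg, hfold,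
      support_neg, card_support_foldMod_le, hT]
  have : 2 * #q.support ≤ 14 := by
    grw [← card_support_X_pow_mul_sub_self hdeg, hsplit, card_support_add_le,
      card_support_X_pow_mul, hT, hp]
  omega

theorem le_nine_of_maxWeight_dvd (hm : Odd m) (hl : l < m) (hba : b < a) (ha : a ≤ 2 * m)
    (h : maxWeight m l ∣ X ^ a + X ^ b + 1) : m ≤ 9 := by
  obtain ⟨q, hq⟩ := h
  have := le_card_support_add_three_of_maxWeight_mul_eq hm hl hba.le ha hq.symm
  have := card_support_le_seven_of_maxWeight_mul_eq hm hl hba.le ha hq.symm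
  omega

end TrinomialQuotient

/-- The companion matrix of `maxWeight m l`: multiplication by `X` on
`(ZMod 2)[X] ⧸ (maxWeight m l)` in the basis `1, X, …, X ^ (m - 1)`. -/
def maxWeightCompanion (m l : ℕ) : Matrix (Fin m) (Fin m) (ZMod 2) :=
  Matrix.of fun i j =>
    if (j : ℕ) + 1 = m then (if (i : ℕ) = l then 0 else 1) else if (i : ℕ) = j + 1 then 1 else 0

/-- The coordinates of `X ^ k` modulo `maxWeight m l`. -/
def maxWeightPowCoords (m l k : ℕ) : Fin m → ZMod 2 :=
  (maxWeightCompanion m l *ᵥ ·)^[k] fun i => if (i : ℕ) = 0 then 1 else 0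

theorem maxWeightCompanion_pow_mulVec (m l k : ℕ) :
    maxWeightCompanion m l ^ k *ᵥ maxWeightPowCoords m l 0 = maxWeightPowCoords m l k :=
  pow_mulVec_eq_iterate _ _ k

theorem not_maxWeight_dvd_of_powCoords {m l a b : ℕ}
    (hf : ∑ i ∈ range (m + 1), maxWeightPowCoords m l i + maxWeightPowCoords m l l = 0)
    (hg : ∀ a ≤ 2 * m, ∀ b < a, 0 < b →
      maxWeightPowCoords m l a + maxWeightPowCoords m l b + maxWeightPowCoords m l 0 ≠ 0)
    (hb : 0 < b) (hba : b < a) (ha : a ≤ 2 * m) : ¬ maxWeight m l ∣ X ^ a + X ^ b + 1 := by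
  refine not_dvd_of_aeval_mulVec (A := maxWeightCompanion m l) (v := maxWeightPowCoords m l 0)
    ?_ ?_
  · simpa [maxWeight, add_mulVec, sum_mulVec, maxWeightCompanion_pow_mulVec] using hf
  · simpa [add_mulVec, maxWeightCompanion_pow_mulVec] using hg a ha b hba hb

theorem maxweight_divides_trinomial_exceptions (m l : ℕ) (hm : Odd m)
    (hl1 : 1 ≤ l) (hl2 : l ≤ m - 1)
    (f : Polynomial (ZMod 2))
    (hf : f = (∑ i ∈ Finset.range (m + 1), X ^ i) + X ^ l)
    (hdvd : ∃ a b : ℕ, 0 < b ∧ b < a ∧ a ≤ 2 * m ∧ f ∣ (X ^ a + X ^ b + 1)) :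
    f = X ^ 3 + X + 1 ∨
    f = X ^ 3 + X ^ 2 + 1 ∨
    f = X ^ 5 + X ^ 3 + X ^ 2 + X + 1 ∨
    f = X ^ 5 + X ^ 4 + X ^ 3 + X + 1 ∨
    f = X ^ 5 + X ^ 4 + X ^ 3 + X ^ 2 + 1 ∨
    f = X ^ 7 + X ^ 6 + X ^ 5 + X ^ 4 + X ^ 3 + X + 1 ∨
    f = X ^ 7 + X ^ 6 + X ^ 5 + X ^ 4 + X ^ 3 + X ^ 2 + 1 ∨
    f.reverse = X ^ 3 + X + 1 ∨
    f.reverse = X ^ 3 + X ^ 2 + 1 ∨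
    f.reverse = X ^ 5 + X ^ 3 + X ^ 2 + X + 1 ∨
    f.reverse = X ^ 5 + X ^ 4 + X ^ 3 + X + 1 ∨
    f.reverse = X ^ 5 + X ^ 4 + X ^ 3 + X ^ 2 + 1 ∨
    f.reverse = X ^ 7 + X ^ 6 + X ^ 5 + X ^ 4 + X ^ 3 + X + 1 ∨
    f.reverse = X ^ 7 + X ^ 6 + X ^ 5 + X ^ 4 + X ^ 3 + X ^ 2 + 1 := by
  obtain ⟨a, b, hb, hba, ha, hdvd⟩ := hdvd
  have hlm : l < m := by omega
  replace hf : f = maxWeight m l := hf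
  subst hf
  have hm9 := le_nine_of_maxWeight_dvd hm hlm hba ha hdvd
  rw [reverse_maxWeight hl1 hlm]
  interval_cases m <;> interval_cases l <;>
    first
    | exact absurd hm (by decide)
    | exact absurd hdvd (not_maxWeight_dvd_of_powCoords (by decide +kernel) (by decide +kernel)
        hb hba ha)
    | (simp only [maxWeight_eq_sub, sum_range_succ, sum_range_zero]; ring_nf; simp)
end

section
/- Let m be odd with m > 7 and 1 ≤ l ≤ m-1, and let f(x) = x^m + x^{m-1} + ... + x^{l+1} + x^{l-1} + ... + x + 1 ∈ F_2[x] be a primitive maximum weight polynomial. Then every nonzero polynomial over F_2 of degree at most 2m that is divisible by f has at least 4 nonzero coefficients; equivalently, no nonzero polynomial of degree at most 2m and weight at most 3 is divisible by f. -/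
/-!
Write `J = 1 + X + ⋯ + X^m`, so that `f = J + X^l`, and `u = m + 1 - l`. Since `f` is prime of
degree `m ≥ 2` and its period `2^m - 1` exceeds `2m`, a multiple of weight at most 3 and degree at
most `2m` would, after cancelling a power of `X`, be a trinomial `X^j + X^i + 1`.

Modulo `X^(m+1) - 1` we have `X * J ≡ J` and `J * p ≡ p(1) * J`; as `m` is odd, `f(1) = 1`, and this
pins down the cofactor: `X^j + X^i + 1 = f * (J + X^a + X^b + X^u)` with `a ≡ j + u` and
`b ≡ i + u (mod m + 1)`. Since `(X + 1) * J = X^(m+1) + 1`, multiplying by `X + 1` gives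
`(X + 1) * (X^j + X^i + 1 + X^l (X^a + X^b + X^u)) = (X^(m+1) + 1) * (J + X^a + X^b + X^u + X^l)`.
The left side has at most 12 terms, the right side at least `2 (m + 1) - 8`, so `m ≤ 9`; the
remaining case `m = 9` is a finite check.
-/

open Polynomial Finset

theorem coeff_multiset_sum_X_pow {R : Type*} [Semiring R] (s : Multiset ℕ) (n : ℕ) :
    (s.map (X ^ ·) : Multiset R[X]).sum.coeff n = s.count n := by
  induction s using Multiset.induction_on with
  | empty => simp
  | cons e s ih =>
    rw [Multiset.map_cons, Multiset.sum_cons, coeff_add, ih, coeff_X_pow, Multiset.count_cons]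
    split_ifs <;> simp_all [add_comm]

theorem X_pow_add_one_mul_sum_X_pow {R : Type*} [Semiring R] (k : ℕ) (s : Multiset ℕ) :
    (X ^ k + 1) * (s.map (X ^ ·) : Multiset R[X]).sum = ((s + s.map (· + k)).map (X ^ ·)).sum := by
  simp [Multiset.sum_map_mul_left, pow_add, add_mul, add_comm]

theorem count_mod_two_eq_of_sum_X_pow_eq {s t : Multiset ℕ}
    (h : (s.map (X ^ ·) : Multiset (ZMod 2)[X]).sum = (t.map (X ^ ·)).sum) (n : ℕ) :
    s.count n % 2 = t.count n % 2 := by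
  have := congrArg (coeff · n) h
  simp only [coeff_multiset_sum_X_pow] at this
  exact (ZMod.natCast_eq_natCast_iff' _ _ _).mp this

theorem le_card_add_card_of_count_mod_two_eq {k : ℕ} {s t : Multiset ℕ}
    (h : ∀ n, s.count n % 2 = (Multiset.range k + t).count n % 2) :
    k ≤ Multiset.card s + Multiset.card t := by
  have hsub : range k ⊆ s.toFinset ∪ t.toFinset := by
    intro n hn
    by_contra hst
    simp only [mem_union, Multiset.mem_toFinset, not_or] at hst
    have := h n
    rw [Multiset.count_eq_zero.mpr hst.1, Multiset.count_add, Multiset.count_eq_zero.mpr hst.2,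
      Multiset.count_eq_one_of_mem (Multiset.nodup_range k) (by simpa using hn)] at this
    omega
  calc k = #(range k) := (card_range k).symm
    _ ≤ #(s.toFinset ∪ t.toFinset) := card_le_card hsub
    _ ≤ #s.toFinset + #t.toFinset := card_union_le _ _
    _ ≤ Multiset.card s + Multiset.card t :=
      add_le_add (Multiset.toFinset_card_le s) (Multiset.toFinset_card_le t)

theorem natDegree_geom_sum_X_le (R : Type*) [Semiring R] (n : ℕ) :
    (∑ k ∈ range (n + 1), (X : R[X]) ^ k).natDegree ≤ n :=
  natDegree_sum_le_of_forall_le _ _ fun k hk =>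
    (natDegree_X_pow_le k).trans (Nat.lt_succ_iff.mp (mem_range.mp hk))

theorem natDegree_geom_sum_add_X_pow {R : Type*} [Semiring R] [Nontrivial R] {m l : ℕ}
    (hl : l < m) : ((∑ k ∈ range (m + 1), (X : R[X]) ^ k) + X ^ l).natDegree = m := by
  obtain ⟨n, rfl⟩ : ∃ n, m = n + 1 := ⟨m - 1, by omega⟩
  have hlow : ((∑ k ∈ range (n + 1), (X : R[X]) ^ k) + X ^ l).natDegree ≤ n := by
    compute_degree
    exact max_le (natDegree_geom_sum_X_le R n) (by omega)
  rw [sum_range_succ, add_right_comm, add_comm, natDegree_add_eq_left_of_natDegree_lt] <;>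
    rw [natDegree_X_pow]
  omega

theorem X_pow_sub_one_dvd_geom_sum_mul_sub {R : Type*} [CommRing R] (n : ℕ) (p : R[X]) :
    X ^ n - 1 ∣ (∑ k ∈ range n, X ^ k) * (p - C (p.eval 1)) := by
  rw [← geom_sum_mul]
  exact mul_dvd_mul_left _ (by simpa using X_sub_C_dvd_sub_C_eval (a := (1 : R)) (p := p))

theorem cofactor_eq_of_mul_eq_trinomial {m l i j : ℕ} {h : (ZMod 2)[X]} (hm : Odd m)
    (hl : 1 ≤ l) (hlm : l < m) (hi : i ≤ 2 * m) (hj : j ≤ 2 * m)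
    (H : ((∑ k ∈ range (m + 1), X ^ k) + X ^ l) * h = X ^ j + X ^ i + 1) :
    h = (∑ k ∈ range (m + 1), X ^ k) + X ^ ((j + (m + 1 - l)) % (m + 1))
      + X ^ ((i + (m + 1 - l)) % (m + 1)) + X ^ (m + 1 - l) := by
  set J : (ZMod 2)[X] := ∑ k ∈ range (m + 1), X ^ k
  set u := m + 1 - l
  set a := (j + u) % (m + 1)
  set b := (i + u) % (m + 1)
  have hJ1 : J.eval 1 = 0 := by
    simp only [J, eval_geom_sum, one_pow, sum_const, card_range, nsmul_eq_mul, mul_one]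
    exact (ZMod.natCast_eq_zero_iff_even).mpr (by simpa [Nat.even_add_one] using hm)
  have hf1 : (J + X ^ l).eval 1 = 1 := by simp [hJ1]
  have hh1 : h.eval 1 = 1 := by
    have := congrArg (eval 1) H
    rwa [eval_mul, hf1, one_mul, show (X ^ j + X ^ i + 1 : (ZMod 2)[X]).eval 1 = 1 by
      simp; decide] at this
  have hdeg : h.natDegree ≤ m := by
    have := congrArg natDegree H
    rw [natDegree_mul (by rintro h0; simp [h0] at hf1) (by rintro rfl; simp at hh1),
      natDegree_geom_sum_add_X_pow hlm] at this
    have : (X ^ j + X ^ i + 1 : (ZMod 2)[X]).natDegree ≤ 2 * m := by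
      compute_degree; omega
    omega
  set φ := AdjoinRoot.mk (X ^ (m + 1) - C 1 : (ZMod 2)[X])
  set x := φ X
  have hx : x ^ (m + 1) = 1 := by
    rw [← map_pow, ← sub_eq_zero, ← map_one φ, ← C_1, ← map_sub]
    exact AdjoinRoot.mk_self
  have hxul : x ^ u * x ^ l = 1 := by rw [← pow_add, Nat.sub_add_cancel (by omega), hx]
  have hJmul : ∀ p, φ (J * p) = φ J * φ (C (p.eval 1)) := fun p => by
    rw [← map_mul, AdjoinRoot.mk_eq_mk, ← mul_sub, C_1]
    exact X_pow_sub_one_dvd_geom_sum_mul_sub _ p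
  have hxJ : φ J * x ^ u = φ J := by simpa using hJmul (X ^ u)
  have hJh : φ J * φ h = φ J := by simpa [hh1] using hJmul h
  have ha : x ^ j * x ^ u = x ^ a := by rw [← pow_add, pow_eq_pow_mod (a := x) _ hx]
  have hb : x ^ i * x ^ u = x ^ b := by rw [← pow_add, pow_eq_pow_mod (a := x) _ hx]
  have hH : (φ J + x ^ l) * φ h = x ^ j + x ^ i + 1 := by simpa [x] using congrArg φ H
  have hmod : φ h = φ (X ^ a + X ^ b + X ^ u - J) := by
    simp only [map_add, map_sub, map_pow]
    linear_combination x ^ u * hH - φ h * hxul - φ h * hxJ - hJh + ha + hb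
  have hsub : h = X ^ a + X ^ b + X ^ u - J := by
    refine sub_eq_zero.mp (eq_zero_of_dvd_of_natDegree_lt (AdjoinRoot.mk_eq_mk.mp hmod) ?_)
    rw [natDegree_X_pow_sub_C, Nat.lt_succ_iff]
    have : a < m + 1 := Nat.mod_lt _ m.succ_pos
    have : b < m + 1 := Nat.mod_lt _ m.succ_pos
    have : J.natDegree ≤ m := natDegree_geom_sum_X_le _ m
    compute_degree
    simp only [max_le_iff]
    omega
  rw [hsub, CharTwo.sub_eq_add]
  ring

/-- The exponents `a, b, u` of the cofactor `J + X^a + X^b + X^u` in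
`cofactor_eq_of_mul_eq_trinomial`. -/
def cofactorExponents (m l i j : ℕ) : Multiset ℕ :=
  {(j + (m + 1 - l)) % (m + 1), (i + (m + 1 - l)) % (m + 1), m + 1 - l}

def trinomialExponents (m l i j : ℕ) : Multiset ℕ :=
  {0, i, j} + (cofactorExponents m l i j).map (l + ·)

theorem sum_X_pow_eq_of_dvd_trinomial {m l i j : ℕ} (hm : Odd m) (hl : 1 ≤ l) (hlm : l < m)
    (hi : i ≤ 2 * m) (hj : j ≤ 2 * m)
    (hdvd : (∑ k ∈ range (m + 1), X ^ k) + X ^ l ∣ (X ^ j + X ^ i + 1 : (ZMod 2)[X])) :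
    ((trinomialExponents m l i j + (trinomialExponents m l i j).map (· + 1)).map (X ^ ·)).sum =
      ((Multiset.range (2 * (m + 1)) + (l ::ₘ cofactorExponents m l i j)
        + (l ::ₘ cofactorExponents m l i j).map (· + (m + 1))).map (X ^ ·) :
          Multiset (ZMod 2)[X]).sum := by
  obtain ⟨h, H⟩ := hdvd
  set J : (ZMod 2)[X] := ∑ k ∈ range (m + 1), X ^ k
  have hJ : J * (X + 1) = X ^ (m + 1) + 1 := by
    simpa only [CharTwo.sub_eq_add] using geom_sum_mul (X : (ZMod 2)[X]) (m + 1)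
  have hrange : ∑ k ∈ range (2 * (m + 1)), (X : (ZMod 2)[X]) ^ k = (X ^ (m + 1) + 1) * J := by
    rw [two_mul, sum_range_add, add_mul, one_mul, mul_sum, add_comm]
    simp only [← pow_add]
    rfl
  rw [← X_pow_add_one_mul_sum_X_pow, add_assoc, Multiset.map_add, Multiset.sum_add,
    ← X_pow_add_one_mul_sum_X_pow, ← range_val, ← sum_eq_multiset_sum, hrange, pow_one]
  rw [cofactor_eq_of_mul_eq_trinomial hm hl hlm hi hj H.symm] at H
  set a := (j + (m + 1 - l)) % (m + 1)
  set b := (i + (m + 1 - l)) % (m + 1)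
  set u := m + 1 - l
  simp only [trinomialExponents, cofactorExponents, Multiset.map_add, Multiset.sum_add,
    Multiset.insert_eq_cons, Multiset.map_cons, Multiset.sum_cons, Multiset.map_singleton,
    Multiset.sum_singleton]
  linear_combination (X + 1) * H + (J + X ^ l + X ^ a + X ^ b + X ^ u) * hJ
    + (X + 1) * X ^ l * (X ^ a + X ^ b + X ^ u) * CharTwo.two_eq_zero (R := (ZMod 2)[X])

theorem exists_count_mod_two_ne_nine : ∀ l < 9, 1 ≤ l → ∀ j < 19, ∀ i < j, ∃ N < 20,
    (trinomialExponents 9 l i j + (trinomialExponents 9 l i j).map (· + 1)).count N % 2 ≠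
      (Multiset.range (2 * (9 + 1)) + (l ::ₘ cofactorExponents 9 l i j)
        + (l ::ₘ cofactorExponents 9 l i j).map (· + (9 + 1))).count N % 2 := by
  decide +kernel

theorem not_dvd_trinomial {m l i j : ℕ} (hm : Odd m) (hm9 : 9 ≤ m) (hl : 1 ≤ l) (hlm : l < m)
    (hij : i < j) (hj : j ≤ 2 * m) :
    ¬ (∑ k ∈ range (m + 1), X ^ k) + X ^ l ∣ (X ^ j + X ^ i + 1 : (ZMod 2)[X]) := by
  intro hdvd
  have hcount := count_mod_two_eq_of_sum_X_pow_eq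
    (sum_X_pow_eq_of_dvd_trinomial hm hl hlm (by omega) hj hdvd)
  rcases hm9.eq_or_lt with rfl | h10
  · obtain ⟨N, -, hN⟩ := exists_count_mod_two_ne_nine l hlm hl j (by omega) i hij
    exact hN (hcount N)
  · simp only [add_assoc] at hcount
    have := le_card_add_card_of_count_mod_two_eq hcount
    simp [trinomialExponents, cofactorExponents] at this
    omega

theorem dvd_X_pow_sub_one_or_dvd_trinomial_of_card_support_le_three {f g : (ZMod 2)[X]}
    (hf : Prime f) (hfX : ¬ f ∣ X) (hg : g ≠ 0) (hcard : #g.support ≤ 3) (hdvd : f ∣ g) :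
    (∃ e, 0 < e ∧ e ≤ g.natDegree ∧ f ∣ X ^ e - 1) ∨
      ∃ i j, i < j ∧ j ≤ g.natDegree ∧ f ∣ X ^ j + X ^ i + 1 := by
  have hC : ∀ x : ZMod 2, x ≠ 0 → C x = 1 := fun x hx => by
    rw [show x = 1 from Fin.eq_one_of_ne_zero x hx, C_1]
  have hXpow : ∀ k, ¬ f ∣ X ^ k := fun k h => hfX (hf.dvd_of_dvd_pow h)
  have hcancel : ∀ k p, f ∣ X ^ k * p → f ∣ p := fun k p h =>
    (hf.dvd_or_dvd h).resolve_left (hXpow k)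
  interval_cases hc : #g.support
  · exact absurd (card_support_eq_zero.mp hc) hg
  · obtain ⟨k, x, hx, rfl⟩ := card_support_eq_one.mp hc
    rw [hC x hx, one_mul] at hdvd
    exact absurd hdvd (hXpow k)
  · obtain ⟨k, v, hkv, x, y, hx, hy, rfl⟩ := card_support_eq_two.mp hc
    rw [hC x hx, hC y hy, one_mul, one_mul] at hdvd ⊢
    refine Or.inl ⟨v - k, by omega, ?_, hcancel k _ ?_⟩
    · refine (Nat.sub_le v k).trans (le_natDegree_of_ne_zero ?_)
      simp [coeff_X_pow, hkv.ne']
    · rwa [CharTwo.sub_eq_add, mul_add, ← pow_add, Nat.add_sub_cancel' hkv.le, mul_one, add_comm]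
  · obtain ⟨k, v, w, hkv, hvw, x, y, z, hx, hy, hz, rfl⟩ := card_support_eq_three.mp hc
    rw [hC x hx, hC y hy, hC z hz, one_mul, one_mul, one_mul] at hdvd ⊢
    refine Or.inr ⟨v - k, w - k, by omega, ?_, hcancel k _ ?_⟩
    · refine (Nat.sub_le w k).trans (le_natDegree_of_ne_zero ?_)
      simp [coeff_X_pow, (hkv.trans hvw).ne', hvw.ne']
    · convert hdvd using 1
      rw [mul_add, mul_add, ← pow_add, ← pow_add, Nat.add_sub_cancel' hkv.le,
        Nat.add_sub_cancel' (hkv.trans hvw).le, mul_one]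
      ring

theorem primitive_maxweight_min_weight_four (m l : ℕ) (hm : Odd m) (hm7 : 7 < m)
    (hl1 : 1 ≤ l) (hl2 : l ≤ m - 1)
    (f : Polynomial (ZMod 2))
    (hf : f = (∑ i ∈ Finset.range (m + 1), X ^ i) + X ^ l)
    (hirr : Irreducible f)
    (hperiod : IsLeast {e : ℕ | 0 < e ∧ f ∣ X ^ e - 1} (2 ^ m - 1)) :
    ∀ g : Polynomial (ZMod 2), g ≠ 0 → g.natDegree ≤ 2 * m → f ∣ g → 4 ≤ g.support.card := by
  intro g hg hgdeg hfg
  by_contra! hcard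
  have hm9 : 9 ≤ m := by obtain ⟨k, rfl⟩ := hm; omega
  have hlm : l < m := by omega
  have hfX : ¬ f ∣ X := fun h => by
    have := natDegree_le_of_dvd h X_ne_zero
    rw [hf, natDegree_geom_sum_add_X_pow hlm, natDegree_X] at this
    omega
  rcases dvd_X_pow_sub_one_or_dvd_trinomial_of_card_support_le_three hirr.prime hfX hg
    (by omega) hfg with ⟨e, he, heg, hdvd⟩ | ⟨i, j, hij, hjg, hdvd⟩
  · have hperiod_le : 2 ^ m - 1 ≤ e := hperiod.2 ⟨he, hdvd⟩
    have hpow : 2 ^ (m - 3) * 8 = 2 ^ m := by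
      rw [show 8 = 2 ^ 3 by rfl, ← pow_add, Nat.sub_add_cancel (by omega)]
    have := (m - 3).lt_two_pow_self
    omega
  · exact not_dvd_trinomial hm hm9 hl1 hlm hij (hjg.trans hgdeg) (hf ▸ hdvd)
end
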